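/- Let φ : Σ → M be a smooth surjective map between finite-dimensional smooth manifolds of the same dimension, with Σ second countable. Then the set of points m ∈ M such that φ is a local diffeomorphism at some preimage of m is dense in M. -/

import Mathlib

/-!
By the inverse function theorem, read in charts, `φ` is a local diffeomorphism at every point where
its differential in charts is invertible. Hence every value of `φ` that has no such "good" preimage
is, in a chart around it, a critical value of one of countably many chart representatives of `φ`
(`Σ` is second countable), and by Sard's theorem in equal dimensions these form a null set. A null
set has empty interior, and since `φ` is surjective the good values contain its complement.
-/

open Manifold Set Filter Topology MeasureTheory

section LocalDiffeomorph

variable {𝕜 : Type*} [NontriviallyNormedField 𝕜]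
  {E : Type*} [NormedAddCommGroup E] [NormedSpace 𝕜 E]
  {F : Type*} [NormedAddCommGroup F] [NormedSpace 𝕜 F]
  {H : Type*} [TopologicalSpace H] {H' : Type*} [TopologicalSpace H']
  {I : ModelWithCorners 𝕜 E H} {J : ModelWithCorners 𝕜 F H'}
  {M : Type*} [TopologicalSpace M] [ChartedSpace H M]
  {N : Type*} [TopologicalSpace N] [ChartedSpace H' N] {n : WithTop ℕ∞}

theorem OpenPartialHomeomorph.isLocalDiffeomorphAt (e : OpenPartialHomeomorph M N)
    (he : ContMDiffOn I J n e e.source) (he' : ContMDiffOn J I n e.symm e.target) {x : M}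
    (hx : x ∈ e.source) : IsLocalDiffeomorphAt I J n e x :=
  ⟨⟨e.toPartialEquiv, e.open_source, e.open_target, he, he'⟩, hx, fun _ _ ↦ rfl⟩

theorem IsLocalDiffeomorphAt.congr_of_eventuallyEq {f g : M → N} {x : M}
    (hg : IsLocalDiffeomorphAt I J n g x) (hfg : f =ᶠ[𝓝 x] g) :
    IsLocalDiffeomorphAt I J n f x := by
  obtain ⟨Φ, hxΦ, hgΦ⟩ := hg
  obtain ⟨U, hfgU, hU, hxU⟩ := eventually_nhds_iff.1 hfg
  let Ψ := Φ.toOpenPartialHomeomorph.restrOpen U hU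
  have hΨ : Ψ.source = Φ.source ∩ U := Φ.toOpenPartialHomeomorph.restrOpen_source U hU
  refine ⟨⟨Ψ.toPartialEquiv, Ψ.open_source, Ψ.open_target, Φ.contMDiffOn.mono ?_,
    Φ.contMDiffOn_invFun.mono ?_⟩, by rw [hΨ]; exact ⟨hxΦ, hxU⟩, fun y hy ↦ ?_⟩
  · exact hΨ ▸ inter_subset_left
  · exact fun y hy ↦ hy.1
  · rw [hΨ] at hy
    exact (hfgU y hy.2).trans (hgΦ hy.1)

theorem isLocalDiffeomorphAt_chartAt [IsManifold I n M] {x y : M}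
    (hy : y ∈ (chartAt H x).source) : IsLocalDiffeomorphAt I I n (chartAt H x) y :=
  (chartAt H x).isLocalDiffeomorphAt contMDiffOn_chart contMDiffOn_chart_symm hy

theorem isLocalDiffeomorphAt_chartAt_symm [IsManifold I n M] {x : M} {z : H}
    (hz : z ∈ (chartAt H x).target) : IsLocalDiffeomorphAt I I n (chartAt H x).symm z :=
  (chartAt H x).symm.isLocalDiffeomorphAt contMDiffOn_chart_symm contMDiffOn_chart hz

end LocalDiffeomorph

theorem isLocalDiffeomorphAt_of_eventually_contDiffAt {𝕜 : Type*} [RCLike 𝕜]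
    {E : Type*} [NormedAddCommGroup E] [NormedSpace 𝕜 E] [CompleteSpace E]
    {F : Type*} [NormedAddCommGroup F] [NormedSpace 𝕜 F] {n : WithTop ℕ∞}
    {G : E → F} {x : E} {G' : E ≃L[𝕜] F} (hG : ∀ᶠ z in 𝓝 x, ContDiffAt 𝕜 n G z)
    (hG' : HasFDerivAt G (G' : E →L[𝕜] F) x) (hn : 1 ≤ n) :
    IsLocalDiffeomorphAt 𝓘(𝕜, E) 𝓘(𝕜, F) n G x := by
  obtain ⟨O, hGO, hO, hx⟩ := eventually_nhds_iff.1 hG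
  replace hG : ContDiffOn 𝕜 n G O := fun z hz ↦ (hGO z hz).contDiffWithinAt
  have hn0 : n ≠ 0 := (zero_lt_one.trans_le hn).ne'
  have hGx : ContDiffAt 𝕜 n G x := hGO x hx
  -- Where the derivative stays invertible the local inverse is smooth, so restrict to that set.
  set W := O ∩ fderiv 𝕜 G ⁻¹' range ((↑) : (E ≃L[𝕜] F) → E →L[𝕜] F)
  have hW : IsOpen W := (hG.continuousOn_fderiv_of_isOpen hO hn).isOpen_inter_preimage hO
    ContinuousLinearEquiv.isOpen
  set P := (hGx.toOpenPartialHomeomorph G hG' hn0).restrOpen W hW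
  refine P.isLocalDiffeomorphAt ?_ ?_
    ⟨hGx.mem_toOpenPartialHomeomorph_source hG' hn0, hx, G', hG'.fderiv.symm⟩
  · exact contMDiffOn_iff_contDiffOn.2 (hG.mono fun y hy ↦ hy.2.1)
  · intro y hy
    obtain ⟨hyH, hyO, A, hA⟩ : y ∈ (hGx.toOpenPartialHomeomorph G hG' hn0).target ∧
        P.symm y ∈ O ∧ ∃ A : E ≃L[𝕜] F, ↑A = fderiv 𝕜 G (P.symm y) := ⟨hy.1, hy.2.1, hy.2.2⟩
    have hGy : ContDiffAt 𝕜 n G (P.symm y) := hGO _ hyO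
    have hA' : HasFDerivAt G (A : E →L[𝕜] F) (P.symm y) :=
      hA ▸ (hGy.differentiableAt hn0).hasFDerivAt
    exact contMDiffWithinAt_iff_contDiffWithinAt.2
      ((OpenPartialHomeomorph.contDiffAt_symm _ hyH hA' hGy).contDiffWithinAt)

section Charts

variable {𝕜 : Type*} [RCLike 𝕜]
  {E : Type*} [NormedAddCommGroup E] [NormedSpace 𝕜 E]
  {F : Type*} [NormedAddCommGroup F] [NormedSpace 𝕜 F]
  {M : Type*} [TopologicalSpace M] [ChartedSpace E M]
  {N : Type*} [TopologicalSpace N] [ChartedSpace F N] {n : WithTop ℕ∞}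
  [IsManifold 𝓘(𝕜, E) n M] [IsManifold 𝓘(𝕜, F) n N] {φ : M → N}

theorem ContMDiff.eventually_contDiffAt_chartAt_comp_comp_chartAt_symm
    (hφ : ContMDiff 𝓘(𝕜, E) 𝓘(𝕜, F) n φ) {x σ : M} {y : N} (hσ : σ ∈ (chartAt E x).source)
    (hσy : φ σ ∈ (chartAt F y).source) :
    ∀ᶠ z in 𝓝 (chartAt E x σ), ContDiffAt 𝕜 n (chartAt F y ∘ φ ∘ (chartAt E x).symm) z := by
  set O := (chartAt E x).target ∩ (chartAt E x).symm ⁻¹' (φ ⁻¹' (chartAt F y).source)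
  have hO : IsOpen O := (chartAt E x).continuousOn_symm.isOpen_inter_preimage
    (chartAt E x).open_target ((chartAt F y).open_source.preimage hφ.continuous)
  have hσO : chartAt E x σ ∈ O := ⟨(chartAt E x).map_source hσ, by
    rwa [mem_preimage, mem_preimage, (chartAt E x).left_inv hσ]⟩
  have hGO : ContDiffOn 𝕜 n (chartAt F y ∘ φ ∘ (chartAt E x).symm) O :=
    contMDiffOn_iff_contDiffOn.1 <| contMDiffOn_chart.comp
      (hφ.comp_contMDiffOn (contMDiffOn_chart_symm.mono inter_subset_left)) fun _ hz ↦ hz.2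
  filter_upwards [hO.mem_nhds hσO] with z hz using hGO.contDiffAt (hO.mem_nhds hz)

theorem ContMDiff.isLocalDiffeomorphAt_of_hasFDerivAt_chartAt [CompleteSpace E]
    (hφ : ContMDiff 𝓘(𝕜, E) 𝓘(𝕜, F) n φ) (hn : 1 ≤ n) {x σ : M} {y : N}
    (hσ : σ ∈ (chartAt E x).source) (hσy : φ σ ∈ (chartAt F y).source) {G' : E ≃L[𝕜] F}
    (hG' : HasFDerivAt (chartAt F y ∘ φ ∘ (chartAt E x).symm) (G' : E →L[𝕜] F)
      (chartAt E x σ)) :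
    IsLocalDiffeomorphAt 𝓘(𝕜, E) 𝓘(𝕜, F) n φ σ := by
  have hG := isLocalDiffeomorphAt_of_eventually_contDiffAt
    (hφ.eventually_contDiffAt_chartAt_comp_comp_chartAt_symm hσ hσy) hG' hn
  have hGσ : (chartAt F y ∘ φ ∘ (chartAt E x).symm) (chartAt E x σ) = chartAt F y (φ σ) := by
    simp only [Function.comp_apply, (chartAt E x).left_inv hσ]
  have hchart := (isLocalDiffeomorphAt_chartAt (I := 𝓘(𝕜, E)) (n := n) hσ).comp _ _ hG |>.comp _ _
    (isLocalDiffeomorphAt_chartAt_symm (I := 𝓘(𝕜, F)) (n := n)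
      (hGσ ▸ (chartAt F y).map_source hσy))
  refine hchart.congr_of_eventuallyEq ?_
  have hU : IsOpen ((chartAt E x).source ∩ φ ⁻¹' (chartAt F y).source) :=
    (chartAt E x).open_source.inter ((chartAt F y).open_source.preimage hφ.continuous)
  filter_upwards [hU.mem_nhds ⟨hσ, hσy⟩] with z hz
  simp only [Function.comp_apply, (chartAt E x).left_inv hz.1, (chartAt F y).left_inv hz.2]

end Charts

theorem MeasureTheory.addHaar_image_setOf_det_fderiv_eq_zero
    {E : Type*} [NormedAddCommGroup E] [NormedSpace ℝ E] [FiniteDimensional ℝ E]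
    [MeasurableSpace E] [BorelSpace E] (μ : Measure E) [μ.IsAddHaarMeasure] {G : E → E}
    {s : Set E} (hG : ∀ z ∈ s, DifferentiableAt ℝ G z) :
    μ (G '' {z ∈ s | (fderiv ℝ G z).det = 0}) = 0 :=
  addHaar_image_eq_zero_of_det_fderivWithin_eq_zero μ
    (fun z hz ↦ (hG z hz.1).hasFDerivAt.hasFDerivWithinAt) fun _ hz ↦ hz.2

/-- Values of `φ` at points where it fails to be a local diffeomorphism; in equal dimensions these
are exactly the critical values of `φ`. -/
def criticalValues {𝕜 : Type*} [NontriviallyNormedField 𝕜]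
    {E : Type*} [NormedAddCommGroup E] [NormedSpace 𝕜 E]
    {F : Type*} [NormedAddCommGroup F] [NormedSpace 𝕜 F]
    {H : Type*} [TopologicalSpace H] {H' : Type*} [TopologicalSpace H']
    {M : Type*} [TopologicalSpace M] [ChartedSpace H M]
    {N : Type*} [TopologicalSpace N] [ChartedSpace H' N]
    (I : ModelWithCorners 𝕜 E H) (J : ModelWithCorners 𝕜 F H') (n : WithTop ℕ∞)
    (φ : M → N) : Set N :=
  φ '' {x | ¬ IsLocalDiffeomorphAt I J n φ x}

theorem interior_eq_empty_of_measure_chartAt_image_eq_zero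
    {H : Type*} [TopologicalSpace H] [MeasurableSpace H] (μ : Measure H) [μ.IsOpenPosMeasure]
    {N : Type*} [TopologicalSpace N] [ChartedSpace H N] {s : Set N}
    (hs : ∀ y, μ (chartAt H y '' (s ∩ (chartAt H y).source)) = 0) : interior s = ∅ := by
  refine eq_empty_of_forall_notMem fun y hy ↦ ?_
  have hV : IsOpen (chartAt H y '' ((chartAt H y).source ∩ interior s)) :=
    (chartAt H y).isOpen_image_source_inter isOpen_interior
  refine (hV.measure_ne_zero μ ⟨chartAt H y y, y, ⟨mem_chart_source H y, hy⟩, rfl⟩) ?_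
  refine measure_mono_null (image_mono ?_) (hs y)
  exact fun z hz ↦ ⟨interior_subset hz.2, hz.1⟩

theorem measure_chartAt_image_criticalValues_eq_zero
    {E : Type*} [NormedAddCommGroup E] [NormedSpace ℝ E] [FiniteDimensional ℝ E]
    [MeasurableSpace E] [BorelSpace E] (μ : Measure E) [μ.IsAddHaarMeasure]
    {M : Type*} [TopologicalSpace M] [ChartedSpace E M] [SecondCountableTopology M]
    {N : Type*} [TopologicalSpace N] [ChartedSpace E N] {n : WithTop ℕ∞}
    [IsManifold 𝓘(ℝ, E) n M] [IsManifold 𝓘(ℝ, E) n N] {φ : M → N}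
    (hφ : ContMDiff 𝓘(ℝ, E) 𝓘(ℝ, E) n φ) (hn : 1 ≤ n) (y : N) :
    μ (chartAt E y '' (criticalValues 𝓘(ℝ, E) 𝓘(ℝ, E) n φ ∩ (chartAt E y).source)) = 0 := by
  obtain ⟨T, hT, hTcover⟩ := countable_cover_nhds fun x : M ↦ chart_source_mem_nhds E x
  set G : M → E → E := fun x ↦ chartAt E y ∘ φ ∘ (chartAt E x).symm
  have hn0 : n ≠ 0 := (zero_lt_one.trans_le hn).ne'
  suffices chartAt E y '' (criticalValues 𝓘(ℝ, E) 𝓘(ℝ, E) n φ ∩ (chartAt E y).source) ⊆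
      ⋃ x ∈ T, G x '' {z | ContDiffAt ℝ n (G x) z ∧ (fderiv ℝ (G x) z).det = 0} from
    measure_mono_null this <| (measure_biUnion_null_iff hT).2 fun x _ ↦
      addHaar_image_setOf_det_fderiv_eq_zero μ fun z (hz : ContDiffAt ℝ n (G x) z) ↦
        hz.differentiableAt hn0
  rintro _ ⟨_, ⟨⟨σ, hσcrit, rfl⟩, hσy⟩, rfl⟩
  obtain ⟨x, hxT, hσ⟩ := mem_iUnion₂.1 (hTcover.symm ▸ mem_univ σ)
  have hGσ : ContDiffAt ℝ n (G x) (chartAt E x σ) :=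
    (hφ.eventually_contDiffAt_chartAt_comp_comp_chartAt_symm hσ hσy).self_of_nhds
  refine mem_biUnion hxT ⟨chartAt E x σ, ⟨hGσ, ?_⟩, ?_⟩
  · by_contra hdet
    refine hσcrit (hφ.isLocalDiffeomorphAt_of_hasFDerivAt_chartAt hn hσ hσy
      (G' := (fderiv ℝ (G x) (chartAt E x σ)).toContinuousLinearEquivOfDetNeZero hdet) ?_)
    rw [ContinuousLinearMap.coe_toContinuousLinearEquivOfDetNeZero]
    exact (hGσ.differentiableAt hn0).hasFDerivAt
  · simp only [G, Function.comp_apply, (chartAt E x).left_inv hσ]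

/-- Let `φ : Σ → M` be a smooth surjective map between smooth `n`-manifolds, with `Σ`
second countable. Then the set of points `m ∈ M` having a preimage at which `φ` is a local
diffeomorphism is dense in `M`. -/
theorem stmt_12 {n : ℕ}
    {S : Type*} [TopologicalSpace S] [ChartedSpace (EuclideanSpace ℝ (Fin n)) S]
    [IsManifold (𝓡 n) (⊤ : ℕ∞) S] [SecondCountableTopology S]
    {M : Type*} [TopologicalSpace M] [ChartedSpace (EuclideanSpace ℝ (Fin n)) M]
    [IsManifold (𝓡 n) (⊤ : ℕ∞) M]
    (φ : S → M) (hφ : ContMDiff (𝓡 n) (𝓡 n) (⊤ : ℕ∞) φ) (hsurj : Function.Surjective φ) :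
    Dense {m : M | ∃ σ : S, φ σ = m ∧ IsLocalDiffeomorphAt (𝓡 n) (𝓡 n) (⊤ : ℕ∞) φ σ} := by
  have hcrit : Dense (criticalValues (𝓡 n) (𝓡 n) (⊤ : ℕ∞) φ)ᶜ :=
    interior_eq_empty_iff_dense_compl.1 <| interior_eq_empty_of_measure_chartAt_image_eq_zero
      volume (measure_chartAt_image_criticalValues_eq_zero volume hφ (by simp))
  refine hcrit.mono fun m hm ↦ ?_
  obtain ⟨σ, rfl⟩ := hsurj m
  by_contra hgood
  exact hm ⟨σ, fun hσ ↦ hgood ⟨σ, rfl, hσ⟩, rfl⟩
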